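/- arXiv:2205.14097 — 3 statements merged into one kernel-verified Lean document; each statement's English description precedes it below -/
import Mathlib

section
/- Every group structure on the set ℚ of rational numbers that is compatible with the metric d(x,y) = |x − y| is isomorphic as a group to the additive group (ℚ,+); in particular, the metric space (ℚ, |x−y|) is a natural metric space. -/
/-
An isometry of `ℚ` is `x ↦ x + c` or `x ↦ c - x`. If a left translation `x ↦ g * x` were a
reflection `x ↦ c - x`, it would fix the midpoint `c / 2`, forcing `g = 1`; hence every left
translation is a genuine translation, `g * x = x + g - 1`, and `x ↦ x - 1` is an isomorphism onto
`(ℚ, +)`. Any two compatible structures are then isomorphic through `(ℚ, +)`.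
-/

/-- A group structure `s` on a metric space `X` is compatible with the metric: all left
translations, right translations, and the inversion are isometries. -/
def Compatible (X : Type*) [MetricSpace X] (s : Group X) : Prop :=
  (∀ g x y : X, dist (s.mul g x) (s.mul g y) = dist x y) ∧
  (∀ g x y : X, dist (s.mul x g) (s.mul y g) = dist x y) ∧
  (∀ x y : X, dist (s.inv x) (s.inv y) = dist x y)

/-- Two group structures are isomorphic as groups. -/
def GroupStructIso {X Y : Type*} (s : Group X) (t : Group Y) : Prop :=
  ∃ f : X ≃ Y, ∀ a b : X, f (s.mul a b) = t.mul (f a) (f b)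

/-- A metric space is natural: there is a compatible group structure, and any two compatible
group structures are isomorphic as groups. -/
def NaturalSpace (X : Type*) [MetricSpace X] : Prop :=
  (∃ s : Group X, Compatible X s) ∧
  ∀ s t : Group X, Compatible X s → Compatible X t → GroupStructIso s t

section LinearOrderedField

variable {𝕜 : Type*} [Field 𝕜] [LinearOrder 𝕜] [IsStrictOrderedRing 𝕜]

theorem eq_add_or_eq_sub_of_abs_sub_eq {f : 𝕜 → 𝕜} (hf : ∀ x y, |f x - f y| = |x - y|) :
    (∀ x, f x = x + f 0) ∨ (∀ x, f x = f 0 - x) := by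
  have hsq : ∀ x y, (f x - f y) ^ 2 = (x - y) ^ 2 := fun x y => by
    rw [← sq_abs, hf, sq_abs]
  have hstep : (f 1 - f 0 - 1) * (f 1 - f 0 + 1) = 0 := by linear_combination hsq 1 0
  rcases mul_eq_zero.1 hstep with h | h
  · refine .inl fun x => ?_
    linear_combination (hsq x 0 - hsq x 1 - (2 * (f x - f 0) - (f 1 - f 0) - 1) * h) / 2
  · refine .inr fun x => ?_
    linear_combination (hsq x 1 - hsq x 0 - ((f 1 - f 0) - 1 - 2 * (f x - f 0)) * h) / 2

theorem mul_eq_add_sub_one_of_abs_sub_eq (s : Group 𝕜)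
    (hs : ∀ g x y, |s.mul g x - s.mul g y| = |x - y|) (g x : 𝕜) :
    s.mul g x = x + g - s.one := by
  have hmul_one : s.mul g s.one = g := s.mul_one g
  have hone_mul : ∀ y, s.mul s.one y = y := s.one_mul
  rcases eq_add_or_eq_sub_of_abs_sub_eq (hs g) with htrans | hrefl
  · linear_combination htrans x - htrans s.one + hmul_one
  · set c := s.mul g 0
    have hfix : s.mul g (c / 2) = s.mul s.one (c / 2) := by
      rw [hrefl, hone_mul]
      ring
    have hg : g = s.one := @mul_right_cancel 𝕜 s.toMul _ _ _ _ hfix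
    have h0 := hrefl 0
    have h1 := hrefl 1
    rw [hg, hone_mul] at h0 h1
    linarith

end LinearOrderedField

theorem Rat.abs_sub_eq_abs_sub_of_dist_eq {a b c d : ℚ} (h : dist a b = dist c d) :
    |a - b| = |c - d| := by
  rw [Rat.dist_eq, Rat.dist_eq] at h
  exact_mod_cast h

theorem exists_equiv_add_of_compatible (s : Group ℚ) (hs : Compatible ℚ s) :
    ∃ f : ℚ ≃ ℚ, ∀ a b : ℚ, f (s.mul a b) = f a + f b := by
  have hmul := mul_eq_add_sub_one_of_abs_sub_eq s fun g x y =>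
    Rat.abs_sub_eq_abs_sub_of_dist_eq (hs.1 g x y)
  refine ⟨Equiv.subRight s.one, fun a b => ?_⟩
  simp only [Equiv.subRight_apply, hmul]
  ring

theorem compatible_multiplicative (E : Type*) [NormedAddCommGroup E] :
    Compatible E (inferInstanceAs (Group (Multiplicative E))) :=
  ⟨dist_add_left, fun g x y => dist_add_right x y g, dist_neg_neg⟩

theorem groupStructIso_of_equiv_add {X Y : Type*} [Add Y] {s t : Group X}
    (fs : X ≃ Y) (hfs : ∀ a b, fs (s.mul a b) = fs a + fs b)
    (ft : X ≃ Y) (hft : ∀ a b, ft (t.mul a b) = ft a + ft b) : GroupStructIso s t :=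
  ⟨fs.trans ft.symm, fun a b => ft.injective <| by simp [hfs, hft]⟩

/-- Every group structure on ℚ compatible with the metric d(x,y) = |x − y| is isomorphic to
the additive group (ℚ,+); in particular (ℚ, |x−y|) is a natural metric space. -/
theorem rat_natural :
    (∀ s : Group ℚ, Compatible ℚ s →
      ∃ f : ℚ ≃ ℚ, ∀ a b : ℚ, f (s.mul a b) = f a + f b) ∧
    NaturalSpace ℚ := by
  refine ⟨exists_equiv_add_of_compatible, ⟨_, compatible_multiplicative ℚ⟩, fun s t hs ht => ?_⟩
  obtain ⟨fs, hfs⟩ := exists_equiv_add_of_compatible s hs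
  obtain ⟨ft, hft⟩ := exists_equiv_add_of_compatible t ht
  exact groupStructIso_of_equiv_add fs hfs ft hft
end

section
/- For every natural number n, every group structure on Euclidean space ℝⁿ that is compatible with the Euclidean metric d(x,y) = ‖x − y‖ is isomorphic as a group to the additive group (ℝⁿ,+); in particular, Euclidean space (ℝⁿ, ‖x−y‖) is a natural metric space. -/
/-! By Mazur–Ulam, every translation `x ↦ a * x` of a group structure with isometric left and right
translations on a real normed space is affine, with a linear isometric part `L a`; likewise
`x ↦ x * b`, with linear part `R b`. Measuring everything from the identity `1`, the defect
`w = L (u + 1) v - v` also equals `R (v + 1) u - u`, hence is odd in `u`. So `v + w` and `v - w`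
are images of `v` under linear isometries and have the norm of their midpoint `v`, which strict
convexity allows only for `w = 0`. Thus `a * b = a + b - 1`, and `x ↦ x - 1` is an isomorphism
onto `(E, +)`. -/

theorem eq_zero_of_norm_add_eq_of_norm_sub_eq {E : Type*} [NormedAddCommGroup E] [NormedSpace ℝ E]
    [StrictConvexSpace ℝ E] {v w : E} (hadd : ‖v + w‖ = ‖v‖) (hsub : ‖v - w‖ = ‖v‖) : w = 0 := by
  have hsum : ‖(v + w) + (v - w)‖ = ‖v + w‖ + ‖v - w‖ := by
    rw [hadd, hsub, add_add_sub_cancel, ← two_smul ℝ v, norm_smul, Real.norm_two, two_mul]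
  have h := eq_of_norm_eq_of_norm_add_eq (hadd.trans hsub.symm) hsum
  have hw : (2 : ℝ) • w = 0 := by
    rw [two_smul, add_eq_zero_iff_eq_neg]
    exact add_left_cancel (h.trans (sub_eq_add_neg v w))
  exact (smul_eq_zero.mp hw).resolve_left two_ne_zero

section IsometricGroup

variable {E : Type*} [NormedAddCommGroup E] [NormedSpace ℝ E] [Group E]

noncomputable def mulLeftLinearPart [IsIsometricSMul E E] (a : E) : E ≃ₗᵢ[ℝ] E :=
  (IsometryEquiv.mulLeft a).toRealAffineIsometryEquiv.linearIsometryEquiv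

noncomputable def mulRightLinearPart [IsIsometricSMul Eᵐᵒᵖ E] (b : E) : E ≃ₗᵢ[ℝ] E :=
  (IsometryEquiv.mulRight b).toRealAffineIsometryEquiv.linearIsometryEquiv

theorem mulLeftLinearPart_sub [IsIsometricSMul E E] (a x y : E) :
    mulLeftLinearPart a (x - y) = a * x - a * y :=
  (IsometryEquiv.mulLeft a).toRealAffineIsometryEquiv.map_vsub x y

theorem mulRightLinearPart_sub [IsIsometricSMul Eᵐᵒᵖ E] (b x y : E) :
    mulRightLinearPart b (x - y) = x * b - y * b :=
  (IsometryEquiv.mulRight b).toRealAffineIsometryEquiv.map_vsub x y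

variable [IsIsometricSMul E E] [IsIsometricSMul Eᵐᵒᵖ E]

theorem mulLeftLinearPart_add_one_sub_self (u v : E) :
    mulLeftLinearPart (u + 1) v - v = mulRightLinearPart (v + 1) u - u := by
  have hl := mulLeftLinearPart_sub (u + 1) (v + 1) 1
  have hr := mulRightLinearPart_sub (v + 1) (u + 1) 1
  rw [add_sub_cancel_right] at hl hr
  rw [hl, hr, mul_one, one_mul]
  abel

theorem mulLeftLinearPart_add_one_apply [StrictConvexSpace ℝ E] (u v : E) :
    mulLeftLinearPart (u + 1) v = v := by
  have hleft : ∀ u', mulLeftLinearPart (u' + 1) v = v + (mulRightLinearPart (v + 1) u' - u') :=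
    fun u' => by rw [← mulLeftLinearPart_add_one_sub_self]; abel
  have hdefect : mulRightLinearPart (v + 1) u - u = 0 := by
    refine eq_zero_of_norm_add_eq_of_norm_sub_eq (v := v) ?_ ?_
    · rw [← hleft, LinearIsometryEquiv.norm_map]
    · rw [sub_eq_add_neg, neg_sub', ← map_neg, ← hleft, LinearIsometryEquiv.norm_map]
  rw [hleft, hdefect, add_zero]

theorem mul_eq_add_sub_one_of_isIsometricSMul [StrictConvexSpace ℝ E] (a b : E) :
    a * b = a + b - 1 := by
  have h := mulLeftLinearPart_sub a b 1
  rw [← sub_add_cancel a 1, mulLeftLinearPart_add_one_apply, sub_add_cancel, mul_one] at h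
  rw [← sub_add_cancel (a * b) a, ← h]
  abel

end IsometricGroup

section Compatible

variable {E : Type*} [NormedAddCommGroup E]

theorem compatible_additive : Compatible E (inferInstanceAs (Group (Multiplicative E))) :=
  ⟨dist_add_left, fun g x y => dist_add_right x y g, dist_neg_neg⟩

theorem Compatible.mul_eq_add_sub_one [NormedSpace ℝ E] [StrictConvexSpace ℝ E] {s : Group E}
    (hs : Compatible E s) (a b : E) : s.mul a b = a + b - s.one := by
  let _ : Group E := s
  have : IsIsometricSMul E E := ⟨fun g => Isometry.of_dist_eq (hs.1 g)⟩
  have : IsIsometricSMul Eᵐᵒᵖ E := ⟨fun g => Isometry.of_dist_eq fun x y => hs.2.1 g.unop x y⟩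
  exact mul_eq_add_sub_one_of_isIsometricSMul a b

theorem Compatible.exists_equiv_mul_eq_add [NormedSpace ℝ E] [StrictConvexSpace ℝ E]
    {s : Group E} (hs : Compatible E s) : ∃ f : E ≃ E, ∀ a b, f (s.mul a b) = f a + f b :=
  ⟨Equiv.subRight s.one, fun a b => by
    simp only [Equiv.subRight_apply, hs.mul_eq_add_sub_one]
    abel⟩

end Compatible

theorem GroupStructIso.of_equiv_mul_eq_add {X Y A : Type*} [Add A] {s : Group X} {t : Group Y}
    (f : X ≃ A) (g : Y ≃ A) (hf : ∀ a b, f (s.mul a b) = f a + f b)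
    (hg : ∀ a b, g (t.mul a b) = g a + g b) : GroupStructIso s t :=
  ⟨f.trans g.symm, fun a b => g.injective (by simp [hf, hg])⟩

/-- For every n, every group structure on Euclidean space ℝⁿ compatible with the Euclidean
metric d(x,y) = ‖x − y‖ is isomorphic to the additive group (ℝⁿ,+); in particular Euclidean
space is a natural metric space. -/
theorem euclidean_natural (n : ℕ) :
    (∀ s : Group (EuclideanSpace ℝ (Fin n)), Compatible (EuclideanSpace ℝ (Fin n)) s →
      ∃ f : EuclideanSpace ℝ (Fin n) ≃ EuclideanSpace ℝ (Fin n),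
        ∀ a b : EuclideanSpace ℝ (Fin n), f (s.mul a b) = f a + f b) ∧
    NaturalSpace (EuclideanSpace ℝ (Fin n)) := by
  refine ⟨fun s hs => hs.exists_equiv_mul_eq_add, ⟨_, compatible_additive⟩, fun s t hs ht => ?_⟩
  obtain ⟨f, hf⟩ := hs.exists_equiv_mul_eq_add
  obtain ⟨g, hg⟩ := ht.exists_equiv_mul_eq_add
  exact .of_equiv_mul_eq_add f g hf hg
end

section
/- For every natural number n, the unit sphere Sⁿ = {x ∈ ℝ^{n+1} : ‖x‖ = 1}, equipped with the metric induced from the Euclidean metric of ℝ^{n+1}, is a natural metric space if and only if n = 0, n = 1, or n = 3. -/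
/-!
Translations by a compatible group structure on the unit sphere `S` of a finite-dimensional real
inner product space `V` preserve inner products, so they are restrictions of linear isometries of
`V`. Hence the multiplication extends bilinearly and satisfies
`⟪x y, w z⟫ + ⟪w y, x z⟫ = 2 ⟪x, w⟫ ⟪y, z⟫`. For orthonormal `u, v` orthogonal to `1` this gives
`u² = v² = -1`, `u v = - v u`, and `1, u, v, u v` orthonormal, so `dim V ≥ 4` once `dim V ≥ 3`.
In dimension `≥ 5` a unit vector `w` orthogonal to these would anticommute with `u v`, and also
commute with it by associativity. In dimensions 1, 2 and 4 the same relations fix the structure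
constants on an orthonormal basis (those of `ℝ`, `ℂ`, `ℍ`), so the linear isometry matching two such
bases is a group isomorphism; the unit spheres of `ℝ`, `ℂ`, `ℍ` give existence.
-/

open Metric Module
open scoped RealInnerProductSpace Quaternion

section Isometry

variable {E F : Type*} [NormedAddCommGroup E] [NormedSpace ℝ E] [NormedAddCommGroup F]
  [NormedSpace ℝ F]

def LinearIsometryEquiv.unitSphere (L : E ≃ₗᵢ[ℝ] F) : sphere (0 : E) 1 ≃ᵢ sphere (0 : F) 1 where
  toEquiv := L.toEquiv.subtypeEquiv fun x => by simp
  isometry_toFun := Isometry.of_dist_eq fun x y => by simp [Subtype.dist_eq]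

@[simp]
theorem LinearIsometryEquiv.coe_unitSphere_apply (L : E ≃ₗᵢ[ℝ] F) (x : sphere (0 : E) 1) :
    (L.unitSphere x : F) = L x :=
  rfl

end Isometry

variable {V : Type*} [NormedAddCommGroup V] [InnerProductSpace ℝ V]

local notation "𝕊" => sphere (0 : V) 1

theorem inner_self_eq_one_of_mem_sphere (x : 𝕊) : ⟪(x : V), x⟫ = 1 := by
  rw [real_inner_self_eq_norm_sq, norm_eq_of_mem_sphere, one_pow]

theorem inner_eq_one_sub_dist_sq (x y : 𝕊) : ⟪(x : V), y⟫ = 1 - dist x y ^ 2 / 2 := by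
  rw [Subtype.dist_eq, dist_eq_norm, norm_sub_sq_real, norm_eq_of_mem_sphere,
    norm_eq_of_mem_sphere]
  ring

theorem eq_neg_of_inner_eq_neg_one {x y : 𝕊} (h : ⟪(x : V), y⟫ = -1) : x = -y :=
  Subtype.ext ((inner_eq_neg_one_iff_of_norm_eq_one (by simp) (by simp)).mp h)

theorem ne_neg_self (x : 𝕊) : x ≠ -x := by
  intro h
  have := congrArg (fun y : 𝕊 => ⟪(x : V), y⟫) h
  rw [coe_neg_sphere, inner_neg_right, inner_self_eq_one_of_mem_sphere] at this
  norm_num at this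

theorem Orthonormal.exists_orthonormalBasis_eq [FiniteDimensional ℝ V] {ι : Type*} [Fintype ι]
    {v : ι → V} (hv : Orthonormal ℝ v) (hcard : Fintype.card ι = finrank ℝ V) :
    ∃ b : OrthonormalBasis ι ℝ V, ⇑b = v := by
  obtain ⟨b, hb⟩ := (hv.comp _ Subtype.val_injective).exists_orthonormalBasis_extension_of_card_eq
    hcard.symm (s := Set.univ)
  exact ⟨b, funext fun i => hb i trivial⟩

theorem Orthonormal.sum_inner_smul_eq [FiniteDimensional ℝ V] {ι : Type*} [Fintype ι]
    {v : ι → V} (hv : Orthonormal ℝ v) (hcard : Fintype.card ι = finrank ℝ V) (x : V) :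
    ∑ i, ⟪v i, x⟫ • v i = x := by
  obtain ⟨b, rfl⟩ := hv.exists_orthonormalBasis_eq hcard
  exact b.sum_repr' x

theorem exists_mem_sphere_forall_inner_eq_zero [FiniteDimensional ℝ V] {r : ℕ} (v : Fin r → V)
    (hr : r < finrank ℝ V) : ∃ w : 𝕊, ∀ i, ⟪(w : V), v i⟫ = 0 := by
  set K := Submodule.span ℝ (Set.range v)
  have hK : finrank ℝ K ≤ r := by simpa [Set.finrank] using finrank_range_le_card v
  have : Kᗮ ≠ ⊥ := by
    rw [Ne, Submodule.orthogonal_eq_bot_iff]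
    rintro h
    rw [h, finrank_top] at hK
    omega
  obtain ⟨w, hwK, hw⟩ := Submodule.exists_mem_ne_zero_of_ne_bot this
  refine ⟨⟨‖w‖⁻¹ • w, by simp [norm_smul, hw]⟩, fun i => ?_⟩
  simp [real_inner_smul_left, K.inner_left_of_mem_orthogonal (Submodule.subset_span ⟨i, rfl⟩) hwK]

theorem exists_orthogonal_pair [FiniteDimensional ℝ V] (x : V) (h : 3 ≤ finrank ℝ V) :
    ∃ u v : 𝕊, ⟪(u : V), x⟫ = 0 ∧ ⟪(v : V), x⟫ = 0 ∧ ⟪(u : V), v⟫ = 0 := by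
  obtain ⟨u, hu⟩ := exists_mem_sphere_forall_inner_eq_zero ![x] (by omega)
  obtain ⟨v, hv⟩ := exists_mem_sphere_forall_inner_eq_zero ![x, u] (by omega)
  exact ⟨u, v, hu 0, hv 0, by rw [real_inner_comm]; exact hv 1⟩

theorem exists_linearIsometryEquiv_of_inner_eq [FiniteDimensional ℝ V] (f : 𝕊 → 𝕊)
    (hf : ∀ x y, ⟪(f x : V), f y⟫ = ⟪(x : V), y⟫) : ∃ L : V ≃ₗᵢ[ℝ] V, ∀ x, (f x : V) = L x := by
  let b := stdOrthonormalBasis ℝ V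
  have hc : Orthonormal ℝ fun i => (f ⟨b i, by simp [b.orthonormal.1 i]⟩ : V) := by
    rw [orthonormal_iff_ite]
    intro i j
    rw [hf]
    exact orthonormal_iff_ite.mp b.orthonormal i j
  obtain ⟨c, hc⟩ := hc.exists_orthonormalBasis_eq (by simp)
  set L := b.equiv c (Equiv.refl _)
  have hLb (i) : L (b i) = c i := b.equiv_apply_basis c _ i
  refine ⟨L, fun x => InnerProductSpace.ext_inner_right_basis c.toBasis fun i => ?_⟩
  rw [c.coe_toBasis, ← hLb i, L.inner_map_map, hLb i, hc]
  exact hf _ _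

theorem coe_apply_eq_sum_of_inner_eq [FiniteDimensional ℝ V] {ι : Type*} [Fintype ι]
    {b : ι → 𝕊} (hb : Orthonormal ℝ fun i => (b i : V)) (hcard : Fintype.card ι = finrank ℝ V)
    {f : 𝕊 → 𝕊} (hf : ∀ x y, ⟪(f x : V), f y⟫ = ⟪(x : V), y⟫) (x : 𝕊) :
    (f x : V) = ∑ i, ⟪(b i : V), x⟫ • (f (b i) : V) := by
  obtain ⟨L, hL⟩ := exists_linearIsometryEquiv_of_inner_eq f hf
  simp only [hL]
  conv_lhs => rw [← hb.sum_inner_smul_eq hcard x]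
  simp

def HasStructureConstants {ι : Type*} [Fintype ι] (s : Group 𝕊) (b : ι → 𝕊)
    (T : ι → ι → ι → ℝ) : Prop :=
  ∀ i j, (s.mul (b i) (b j) : V) = ∑ k, T i j k • (b k : V)

-- The multiplication tables of `ℍ` in the basis `(1, i, j, k)` and of `ℂ` in the basis `(1, i)`:
-- the entry `T a b c` is the `c`-th coordinate of `eₐ * e_b`.
def quaternionStructureConstants : Fin 4 → Fin 4 → Fin 4 → ℝ :=
  ![![![1, 0, 0, 0], ![0, 1, 0, 0], ![0, 0, 1, 0], ![0, 0, 0, 1]],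
    ![![0, 1, 0, 0], ![-1, 0, 0, 0], ![0, 0, 0, 1], ![0, 0, -1, 0]],
    ![![0, 0, 1, 0], ![0, 0, 0, -1], ![-1, 0, 0, 0], ![0, 1, 0, 0]],
    ![![0, 0, 0, 1], ![0, 0, 1, 0], ![0, -1, 0, 0], ![-1, 0, 0, 0]]]

def complexStructureConstants : Fin 2 → Fin 2 → Fin 2 → ℝ :=
  ![![![1, 0], ![0, 1]], ![![0, 1], ![-1, 0]]]

section Compatible

variable [Group (sphere (0 : V) 1)]

theorem hasStructureConstants_one : HasStructureConstants inferInstance ![(1 : 𝕊)] 1 := by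
  intro i j
  fin_cases i; fin_cases j
  show ((1 * 1 : 𝕊) : V) = _
  simp

namespace Compatible

theorem inner_mul_left (hs : Compatible 𝕊 inferInstance) (g x y : 𝕊) :
    ⟪((g * x : 𝕊) : V), (g * y : 𝕊)⟫ = ⟪(x : V), y⟫ := by
  rw [inner_eq_one_sub_dist_sq, inner_eq_one_sub_dist_sq,
    show dist (g * x) (g * y) = dist x y from hs.1 g x y]

theorem inner_mul_right (hs : Compatible 𝕊 inferInstance) (g x y : 𝕊) :
    ⟪((x * g : 𝕊) : V), (y * g : 𝕊)⟫ = ⟪(x : V), y⟫ := by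
  rw [inner_eq_one_sub_dist_sq, inner_eq_one_sub_dist_sq,
    show dist (x * g) (y * g) = dist x y from hs.2.1 g x y]

theorem inner_self_mul_eq_zero (hs : Compatible 𝕊 inferInstance) {u v : 𝕊}
    (hv : ⟪(v : V), (1 : 𝕊)⟫ = 0) : ⟪(u : V), (u * v : 𝕊)⟫ = 0 := by
  simpa [real_inner_comm, hv] using hs.inner_mul_left u 1 v

theorem inner_mul_self_eq_zero (hs : Compatible 𝕊 inferInstance) {u v : 𝕊}
    (hu : ⟪(u : V), (1 : 𝕊)⟫ = 0) : ⟪(v : V), (u * v : 𝕊)⟫ = 0 := by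
  simpa [real_inner_comm, hu] using hs.inner_mul_right v 1 u

variable [FiniteDimensional ℝ V]

theorem neg_mul (hs : Compatible 𝕊 inferInstance) (x y : 𝕊) : -x * y = -(x * y) := by
  obtain ⟨L, hL⟩ := exists_linearIsometryEquiv_of_inner_eq _ (hs.inner_mul_right y)
  exact Subtype.ext (by simp [hL])

theorem mul_neg (hs : Compatible 𝕊 inferInstance) (x y : 𝕊) : x * -y = -(x * y) := by
  obtain ⟨L, hL⟩ := exists_linearIsometryEquiv_of_inner_eq _ (hs.inner_mul_left x)
  exact Subtype.ext (by simp [hL])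

theorem inner_mul_mul_add_inner_mul_mul (hs : Compatible 𝕊 inferInstance) (x y w z : 𝕊) :
    ⟪((x * y : 𝕊) : V), (w * z : 𝕊)⟫ + ⟪((w * y : 𝕊) : V), (x * z : 𝕊)⟫ =
      2 * ⟪(x : V), w⟫ * ⟪(y : V), z⟫ := by
  obtain ⟨Ly, hy⟩ := exists_linearIsometryEquiv_of_inner_eq _ (hs.inner_mul_right y)
  obtain ⟨Lz, hz⟩ := exists_linearIsometryEquiv_of_inner_eq _ (hs.inner_mul_right z)
  have hunit (u : 𝕊) : ⟪Ly u, Lz u⟫ = ⟪(y : V), z⟫ := by rw [← hy, ← hz, hs.inner_mul_left]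
  have hquad (a : V) : ⟪Ly a, Lz a⟫ = ‖a‖ ^ 2 * ⟪(y : V), z⟫ := by
    obtain ⟨r, u, rfl⟩ : ∃ (r : ℝ) (u : 𝕊), a = r • (u : V) := by
      rcases eq_or_ne a 0 with rfl | ha
      · exact ⟨0, 1, by simp⟩
      · exact ⟨‖a‖, ⟨‖a‖⁻¹ • a, by simp [norm_smul, ha]⟩, by simp [smul_smul, ha]⟩
    simp only [map_smul, real_inner_smul_left, real_inner_smul_right, hunit, norm_smul,
      norm_eq_of_mem_sphere, mul_one, Real.norm_eq_abs, sq_abs]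
    ring
  have hxw := hquad (x + w)
  rw [map_add, map_add, inner_add_left, inner_add_right, inner_add_right, hquad, hquad,
    norm_add_sq_real] at hxw
  simp only [hy, hz, norm_eq_of_mem_sphere] at hxw ⊢
  linarith

theorem mul_self_eq_neg_one (hs : Compatible 𝕊 inferInstance) {u : 𝕊}
    (hu : ⟪(u : V), (1 : 𝕊)⟫ = 0) : u * u = -1 := by
  have h := hs.inner_mul_mul_add_inner_mul_mul u u 1 (u * u)
  have h' := hs.inner_mul_left u 1 (u * u)
  simp only [one_mul, mul_one] at h h'
  rw [h', hu, inner_self_eq_one_of_mem_sphere] at h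
  exact eq_neg_of_inner_eq_neg_one (by rw [real_inner_comm]; linarith)

theorem mul_eq_neg_mul_swap (hs : Compatible 𝕊 inferInstance) {u v : 𝕊}
    (hu : ⟪(u : V), (1 : 𝕊)⟫ = 0) (hv : ⟪(v : V), (1 : 𝕊)⟫ = 0) (huv : ⟪(u : V), v⟫ = 0) :
    u * v = -(v * u) := by
  have h := hs.inner_mul_mul_add_inner_mul_mul u v v u
  rw [hs.mul_self_eq_neg_one hu, hs.mul_self_eq_neg_one hv, huv, coe_neg_sphere, inner_neg_neg,
    inner_self_eq_one_of_mem_sphere] at h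
  exact eq_neg_of_inner_eq_neg_one (by linarith)

theorem inner_mul_one_eq_zero (hs : Compatible 𝕊 inferInstance) {u v : 𝕊}
    (hu : ⟪(u : V), (1 : 𝕊)⟫ = 0) (huv : ⟪(u : V), v⟫ = 0) :
    ⟪((u * v : 𝕊) : V), (1 : 𝕊)⟫ = 0 := by
  have h := hs.inner_mul_mul_add_inner_mul_mul u v 1 1
  simp only [one_mul, mul_one, hu, real_inner_comm (u : V) v, huv] at h
  linarith

theorem orthonormal_quaternion (hs : Compatible 𝕊 inferInstance) {u v : 𝕊}
    (hu : ⟪(u : V), (1 : 𝕊)⟫ = 0) (hv : ⟪(v : V), (1 : 𝕊)⟫ = 0) (huv : ⟪(u : V), v⟫ = 0) :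
    Orthonormal ℝ fun i => (![1, u, v, u * v] i : V) := by
  have h1 := hs.inner_mul_one_eq_zero hu huv
  have h2 := hs.inner_self_mul_eq_zero (u := u) hv
  have h3 := hs.inner_mul_self_eq_zero (v := v) hu
  rw [orthonormal_iff_ite]
  intro i j
  fin_cases i <;> fin_cases j <;> simp [real_inner_comm, hu, hv, huv, h1, h2, h3]

theorem mul_mul_comm_of_inner_eq_zero (hs : Compatible 𝕊 inferInstance) {u v w : 𝕊}
    (hu : ⟪(u : V), (1 : 𝕊)⟫ = 0) (hv : ⟪(v : V), (1 : 𝕊)⟫ = 0) (hw : ⟪(w : V), (1 : 𝕊)⟫ = 0)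
    (hwu : ⟪(w : V), u⟫ = 0) (hwv : ⟪(w : V), v⟫ = 0) : w * (u * v) = u * v * w := by
  rw [← mul_assoc, hs.mul_eq_neg_mul_swap hw hu hwu, hs.neg_mul, mul_assoc u w v,
    hs.mul_eq_neg_mul_swap hw hv hwv, hs.mul_neg, neg_neg, mul_assoc]

theorem finrank_eq_one_or_two_or_four (hs : Compatible 𝕊 inferInstance) :
    finrank ℝ V = 1 ∨ finrank ℝ V = 2 ∨ finrank ℝ V = 4 := by
  have hpos : 0 < finrank ℝ V :=
    finrank_pos_iff_exists_ne_zero.mpr ⟨(1 : 𝕊), ne_zero_of_mem_unit_sphere _⟩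
  by_contra hV
  obtain ⟨u, v, hu, hv, huv⟩ := exists_orthogonal_pair ((1 : 𝕊) : V) (by omega)
  have h4 : 4 ≤ finrank ℝ V := by
    simpa using (hs.orthonormal_quaternion hu hv huv).linearIndependent.fintype_card_le_finrank
  obtain ⟨w, hw⟩ :=
    exists_mem_sphere_forall_inner_eq_zero ![((1 : 𝕊) : V), u, v, (u * v : 𝕊)] (by omega)
  have hk := hs.inner_mul_one_eq_zero hu huv
  have hanti := hs.mul_eq_neg_mul_swap (hw 0) hk (hw 3)
  rw [hs.mul_mul_comm_of_inner_eq_zero hu hv (hw 0) (hw 1) (hw 2)] at hanti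
  exact ne_neg_self _ hanti

theorem coe_mul_eq_sum {ι : Type*} [Fintype ι] (hs : Compatible 𝕊 inferInstance) {b : ι → 𝕊}
    (hb : Orthonormal ℝ fun i => (b i : V)) (hcard : Fintype.card ι = finrank ℝ V) (x y : 𝕊) :
    ((x * y : 𝕊) : V) = ∑ i, ∑ j, (⟪(b i : V), x⟫ * ⟪(b j : V), y⟫) • ((b i * b j : 𝕊) : V) := by
  rw [coe_apply_eq_sum_of_inner_eq hb hcard (f := (· * y)) (hs.inner_mul_right y) x]
  refine Finset.sum_congr rfl fun i _ => ?_
  rw [coe_apply_eq_sum_of_inner_eq hb hcard (f := (b i * ·)) (hs.inner_mul_left (b i)) y,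
    Finset.smul_sum]
  simp_rw [smul_smul]

theorem coe_mul_eq_sum_structureConstants {ι : Type*} [Fintype ι]
    (hs : Compatible 𝕊 inferInstance) {b : ι → 𝕊} (hb : Orthonormal ℝ fun i => (b i : V))
    (hcard : Fintype.card ι = finrank ℝ V) {T : ι → ι → ι → ℝ}
    (hT : HasStructureConstants inferInstance b T) (x y : 𝕊) :
    ((x * y : 𝕊) : V) =
      ∑ i, ∑ j, ∑ k, (⟪(b i : V), x⟫ * ⟪(b j : V), y⟫ * T i j k) • (b k : V) := by
  rw [hs.coe_mul_eq_sum hb hcard]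
  refine Finset.sum_congr rfl fun i _ => Finset.sum_congr rfl fun j _ => ?_
  rw [show ((b i * b j : 𝕊) : V) = _ from hT i j, Finset.smul_sum]
  simp_rw [smul_smul]

theorem hasStructureConstants_quaternion (hs : Compatible 𝕊 inferInstance) {u v : 𝕊}
    (hu : ⟪(u : V), (1 : 𝕊)⟫ = 0) (hv : ⟪(v : V), (1 : 𝕊)⟫ = 0) (huv : ⟪(u : V), v⟫ = 0) :
    HasStructureConstants inferInstance ![1, u, v, u * v] quaternionStructureConstants := by
  have hk := hs.inner_mul_one_eq_zero hu huv
  have huu := hs.mul_self_eq_neg_one hu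
  have hvv := hs.mul_self_eq_neg_one hv
  have hkk := hs.mul_self_eq_neg_one hk
  have hvu : v * u = -(u * v) := by rw [hs.mul_eq_neg_mul_swap hu hv huv, neg_neg]
  have huk : u * (u * v) = -v := by rw [← mul_assoc, huu, hs.neg_mul, one_mul]
  have hkv : u * v * v = -u := by rw [mul_assoc, hvv, hs.mul_neg, mul_one]
  have hku : u * v * u = v := by
    rw [hs.mul_eq_neg_mul_swap hk hu (by rw [real_inner_comm]; exact hs.inner_self_mul_eq_zero hv),
      huk, neg_neg]
  have hvk : v * (u * v) = u := by
    rw [hs.mul_eq_neg_mul_swap hv hk (hs.inner_mul_self_eq_zero hu), hkv, neg_neg]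
  intro i j
  show ((_ * _ : 𝕊) : V) = _
  fin_cases i <;> fin_cases j <;>
    simp [quaternionStructureConstants, Fin.sum_univ_four, huu, hvv, hkk, hvu, huk, hkv, hku, hvk]

theorem hasStructureConstants_complex (hs : Compatible 𝕊 inferInstance) {u : 𝕊}
    (hu : ⟪(u : V), (1 : 𝕊)⟫ = 0) :
    HasStructureConstants inferInstance ![1, u] complexStructureConstants := by
  intro i j
  show ((_ * _ : 𝕊) : V) = _
  fin_cases i <;> fin_cases j <;>
    simp [complexStructureConstants, hs.mul_self_eq_neg_one hu]

theorem exists_hasStructureConstants_complex (hs : Compatible 𝕊 inferInstance)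
    (h : 2 ≤ finrank ℝ V) : ∃ b : Fin 2 → 𝕊, (Orthonormal ℝ fun i => (b i : V)) ∧
      HasStructureConstants inferInstance b complexStructureConstants := by
  obtain ⟨u, hu⟩ := exists_mem_sphere_forall_inner_eq_zero ![((1 : 𝕊) : V)] (by omega)
  replace hu : ⟪(u : V), (1 : 𝕊)⟫ = 0 := hu 0
  refine ⟨![1, u], ?_, hs.hasStructureConstants_complex hu⟩
  rw [orthonormal_iff_ite]
  intro i j
  fin_cases i <;> fin_cases j <;> simp [real_inner_comm, hu]

theorem exists_hasStructureConstants_quaternion (hs : Compatible 𝕊 inferInstance)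
    (h : 3 ≤ finrank ℝ V) : ∃ b : Fin 4 → 𝕊, (Orthonormal ℝ fun i => (b i : V)) ∧
      HasStructureConstants inferInstance b quaternionStructureConstants := by
  obtain ⟨u, v, hu, hv, huv⟩ := exists_orthogonal_pair ((1 : 𝕊) : V) h
  exact ⟨_, hs.orthonormal_quaternion hu hv huv, hs.hasStructureConstants_quaternion hu hv huv⟩

end Compatible

end Compatible

theorem groupStructIso_of_hasStructureConstants [FiniteDimensional ℝ V] {ι : Type*} [Fintype ι]
    {s t : Group 𝕊} (hs : Compatible 𝕊 s) (ht : Compatible 𝕊 t) {b c : ι → 𝕊}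
    (hb : Orthonormal ℝ fun i => (b i : V)) (hc : Orthonormal ℝ fun i => (c i : V))
    (hcard : Fintype.card ι = finrank ℝ V) {T : ι → ι → ι → ℝ}
    (hbT : HasStructureConstants s b T) (hcT : HasStructureConstants t c T) :
    GroupStructIso s t := by
  obtain ⟨B, hB⟩ := hb.exists_orthonormalBasis_eq hcard
  obtain ⟨C, hC⟩ := hc.exists_orthonormalBasis_eq hcard
  set Φ := B.equiv C (Equiv.refl ι)
  have hΦ (i) : Φ (b i) = c i := by simpa [hB, hC] using B.equiv_apply_basis C (Equiv.refl ι) i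
  have hinner (i) (z : V) : ⟪(c i : V), Φ z⟫ = ⟪(b i : V), z⟫ := by rw [← hΦ, Φ.inner_map_map]
  refine ⟨Φ.unitSphere.toEquiv, fun x y => Subtype.ext ?_⟩
  calc Φ (s.mul x y : V)
      = Φ (∑ i, ∑ j, ∑ k, (⟪(b i : V), x⟫ * ⟪(b j : V), y⟫ * T i j k) • (b k : V)) :=
        congrArg Φ (letI := s; hs.coe_mul_eq_sum_structureConstants hb hcard hbT x y)
    _ = ∑ i, ∑ j, ∑ k, (⟪(c i : V), Φ.unitSphere x⟫ * ⟪(c j : V), Φ.unitSphere y⟫ * T i j k) •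
          (c k : V) := by
        simp [map_sum, hΦ, hinner]
    _ = (t.mul (Φ.unitSphere x) (Φ.unitSphere y) : V) :=
        (letI := t; ht.coe_mul_eq_sum_structureConstants hc hcard hcT
          (Φ.unitSphere x) (Φ.unitSphere y)).symm

theorem groupStructIso_of_finrank_eq [FiniteDimensional ℝ V]
    (hV : finrank ℝ V = 1 ∨ finrank ℝ V = 2 ∨ finrank ℝ V = 4) {s t : Group 𝕊}
    (hs : Compatible 𝕊 s) (ht : Compatible 𝕊 t) : GroupStructIso s t := by
  suffices ∃ (n : ℕ) (T : Fin n → Fin n → Fin n → ℝ), n = finrank ℝ V ∧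
      ∀ r : Group 𝕊, Compatible 𝕊 r →
        ∃ b : Fin n → 𝕊, (Orthonormal ℝ fun i => (b i : V)) ∧ HasStructureConstants r b T by
    obtain ⟨n, T, hn, hT⟩ := this
    obtain ⟨b, hb, hbT⟩ := hT s hs
    obtain ⟨c, hc, hcT⟩ := hT t ht
    exact groupStructIso_of_hasStructureConstants hs ht hb hc (by simp [hn]) hbT hcT
  rcases hV with hV | hV | hV
  · refine ⟨1, 1, hV.symm, fun r _ => letI := r; ⟨![1], ?_, hasStructureConstants_one⟩⟩
    simp [Fin.fin_one_eq_zero]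
  · exact ⟨2, complexStructureConstants, hV.symm,
      fun r hr => letI := r; hr.exists_hasStructureConstants_complex (by omega)⟩
  · exact ⟨4, quaternionStructureConstants, hV.symm,
      fun r hr => letI := r; hr.exists_hasStructureConstants_quaternion (by omega)⟩

theorem compatible_unitSphere (𝕜 : Type*) [NormedDivisionRing 𝕜] :
    Compatible (sphere (0 : 𝕜) 1) inferInstance := by
  refine ⟨fun g x y => ?_, fun g x y => ?_, fun x y => ?_⟩
  · show dist (g * x) (g * y) = dist x y
    simp [Subtype.dist_eq, dist_eq_norm, ← mul_sub]
  · show dist (x * g) (y * g) = dist x y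
    simp [Subtype.dist_eq, dist_eq_norm, ← sub_mul]
  · show dist x⁻¹ y⁻¹ = dist x y
    simp [Subtype.dist_eq, dist_inv_inv₀ (ne_zero_of_mem_unit_sphere x)
      (ne_zero_of_mem_unit_sphere y)]

theorem Compatible.transfer {X Y : Type*} [MetricSpace X] [MetricSpace Y] [Group Y]
    (hY : Compatible Y inferInstance) (e : X ≃ᵢ Y) : Compatible X e.toEquiv.group := by
  refine ⟨fun g x y => ?_, fun g x y => ?_, fun x y => ?_⟩
  · exact (e.symm.dist_eq _ _).trans ((hY.1 (e g) (e x) (e y)).trans (e.dist_eq x y))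
  · exact (e.symm.dist_eq _ _).trans ((hY.2.1 (e g) (e x) (e y)).trans (e.dist_eq x y))
  · exact (e.symm.dist_eq _ _).trans ((hY.2.2 (e x) (e y)).trans (e.dist_eq x y))

theorem exists_compatible_of_finrank_eq (𝕜 : Type*) [NormedDivisionRing 𝕜]
    [InnerProductSpace ℝ 𝕜] [FiniteDimensional ℝ 𝕜] [FiniteDimensional ℝ V]
    (h : finrank ℝ V = finrank ℝ 𝕜) : ∃ s : Group 𝕊, Compatible 𝕊 s :=
  ⟨_, (compatible_unitSphere 𝕜).transfer
    ((stdOrthonormalBasis ℝ V).equiv (stdOrthonormalBasis ℝ 𝕜) (finCongr h)).unitSphere⟩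

theorem naturalSpace_sphere_iff [FiniteDimensional ℝ V] :
    NaturalSpace 𝕊 ↔ finrank ℝ V = 1 ∨ finrank ℝ V = 2 ∨ finrank ℝ V = 4 := by
  refine ⟨fun ⟨⟨s, hs⟩, _⟩ => letI := s; hs.finrank_eq_one_or_two_or_four,
    fun hV => ⟨?_, fun s t => groupStructIso_of_finrank_eq hV⟩⟩
  rcases hV with hV | hV | hV
  · exact exists_compatible_of_finrank_eq ℝ (by simp [hV])
  · exact exists_compatible_of_finrank_eq ℂ (by simp [hV])
  · exact exists_compatible_of_finrank_eq ℍ (by rw [hV, Quaternion.finrank_eq_four])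

/-- The unit sphere Sⁿ ⊆ ℝ^(n+1), with the metric induced from the Euclidean metric, is a
natural metric space if and only if n = 0, n = 1 or n = 3. -/
theorem sphere_natural_iff (n : ℕ) :
    NaturalSpace (Metric.sphere (0 : EuclideanSpace ℝ (Fin (n + 1))) 1) ↔
      n = 0 ∨ n = 1 ∨ n = 3 := by
  simpa using naturalSpace_sphere_iff (V := EuclideanSpace ℝ (Fin (n + 1)))
end
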